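/- Let m > 0, let d ≥ 1 be an integer, let Q⁰, Q¹ : ℝ^d × ℝ^d → ℂ be bounded measurable functions, and define the resonant kernels N⁰, N¹, P₊, P₋ from Q⁰, Q¹. Let T > 0 and let ρ⁰, ρ¹ : [0,T] × ℝ^d → ℝ and ρ^× : [0,T] × ℝ^d → ℂ be such that ρ^×(t,·) is measurable and Lebesgue integrable for every t ∈ [0,T], and such that for every ξ ∈ ℝ^d the maps t ↦ ρ⁰(t,ξ), t ↦ ρ¹(t,ξ) and t ↦ ρ^×(t,ξ) are differentiable on [0,T] and satisfy the resonant (cross) system. Then for every ξ ∈ ℝ^d such that ρ⁰(t,ξ) ρ¹(t,ξ) ≠ 0 for all t ∈ [0,T], and for every t ∈ [0,T], one has |ρ^×(t,ξ)|² ρ⁰(0,ξ) ρ¹(0,ξ) = |ρ^×(0,ξ)|² ρ⁰(t,ξ) ρ¹(t,ξ); equivalently, the quantity |ρ^×|/√(ρ⁰ ρ¹) is constant in time at such ξ. -/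

import Mathlib

noncomputable section

open MeasureTheory

/-- Euclidean space `ℝ^d`. -/
abbrev Euc (d : ℕ) := EuclideanSpace ℝ (Fin d)

/-- The Japanese bracket `⟨x⟩ = √(m + |x|²)` on `ℝ^d`. -/
def jb (m : ℝ) {d : ℕ} (x : Euc d) : ℝ :=
  Real.sqrt (m + ‖x‖ ^ 2)

/-- The normalized quadratic interaction coefficient
`q^η(k₁,k₂) = Q^η(k₁,k₂) / (4 (2π)^{d/2} ⟨k₁⟩ ⟨k₂⟩)`. -/
def q2 (m : ℝ) {d : ℕ} (Q : Fin 2 → Euc d → Euc d → ℂ) (η : Fin 2) (k₁ k₂ : Euc d) : ℂ :=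
  Q η k₁ k₂ / ((4 * (2 * Real.pi) ^ ((d : ℝ) / 2) * (jb m k₁ * jb m k₂) : ℝ) : ℂ)

/-- The cubic interaction coefficient `q^η_ι`. -/
def q3 (m : ℝ) {d : ℕ} (Q : Fin 2 → Euc d → Euc d → ℂ) (η : Fin 2) (ι : ℝ)
    (k₁ k₂ k₃ : Euc d) : ℂ :=
  ((4 * jb m (k₁ + k₃) /
      (m + 2 * ((inner ℝ (k₁ + k₂ + k₃) k₂ : ℝ) - ι * (jb m (k₁ + k₂ + k₃) * jb m k₂))) : ℝ) : ℂ) *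
    q2 m Q (1 - η) k₁ k₃ * q2 m Q η (k₁ + k₃) k₂

/-- The resonant kernel `N^η(ξ,ζ) = q^η_{+1}(ξ,ζ,−ζ) − conj(q^η_{−1}(ξ,−ζ,ζ))`. -/
def Nker (m : ℝ) {d : ℕ} (Q : Fin 2 → Euc d → Euc d → ℂ) (η : Fin 2) (ξ ζ : Euc d) : ℂ :=
  q3 m Q η 1 ξ ζ (-ζ) - (starRingEnd ℂ) (q3 m Q η (-1) ξ (-ζ) ζ)

/-- The resonant kernel `P₊(ξ,ζ) = conj(q^1_{+1}(ξ,ζ,−ζ)) − q^0_{+1}(ξ,ζ,−ζ)`. -/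
def PkerP (m : ℝ) {d : ℕ} (Q : Fin 2 → Euc d → Euc d → ℂ) (ξ ζ : Euc d) : ℂ :=
  (starRingEnd ℂ) (q3 m Q 1 1 ξ ζ (-ζ)) - q3 m Q 0 1 ξ ζ (-ζ)

/-- The resonant kernel `P₋(ξ,ζ) = conj(q^1_{−1}(ξ,−ζ,ζ)) − q^0_{−1}(ξ,−ζ,ζ)`. -/
def PkerM (m : ℝ) {d : ℕ} (Q : Fin 2 → Euc d → Euc d → ℂ) (ξ ζ : Euc d) : ℂ :=
  (starRingEnd ℂ) (q3 m Q 1 (-1) ξ (-ζ) ζ) - q3 m Q 0 (-1) ξ (-ζ) ζ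

/-! ### Auxiliary lemmas -/

lemma jb_pos {m : ℝ} (hm : 0 < m) {d : ℕ} (x : Euc d) : 0 < jb m x := by
  unfold jb; positivity

lemma jb_sq {m : ℝ} (hm : 0 < m) {d : ℕ} (x : Euc d) : jb m x ^ 2 = m + ‖x‖ ^ 2 := by
  unfold jb; rw [Real.sq_sqrt]; positivity

lemma sqrt_le_jb {m : ℝ} (hm : 0 < m) {d : ℕ} (x : Euc d) : Real.sqrt m ≤ jb m x := by
  unfold jb; exact Real.sqrt_le_sqrt (by nlinarith [sq_nonneg ‖x‖])

lemma jb_neg {m : ℝ} {d : ℕ} (x : Euc d) : jb m (-x) = jb m x := by simp [jb]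

lemma jb_mul_ge {m : ℝ} (hm : 0 < m) {d : ℕ} (x y : Euc d) :
    m + |(inner ℝ x y : ℝ)| ≤ jb m x * jb m y := by
  have h1 : |(inner ℝ x y : ℝ)| ≤ ‖x‖ * ‖y‖ := abs_real_inner_le_norm x y
  have h2 : (m + ‖x‖ * ‖y‖) ^ 2 ≤ (jb m x * jb m y) ^ 2 := by
    rw [mul_pow, jb_sq hm, jb_sq hm]
    nlinarith [sq_nonneg (‖x‖ - ‖y‖), norm_nonneg x, norm_nonneg y]
  have h3 : 0 ≤ jb m x * jb m y := le_of_lt (mul_pos (jb_pos hm x) (jb_pos hm y))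
  nlinarith [abs_nonneg (inner ℝ x y : ℝ), mul_nonneg (norm_nonneg x) (norm_nonneg y)]

lemma denom_ge {m : ℝ} (hm : 0 < m) {d : ℕ} {ι : ℝ} (hι : ι = 1 ∨ ι = -1) (x y : Euc d) :
    m ≤ |m + 2 * ((inner ℝ x y : ℝ) - ι * (jb m x * jb m y))| := by
  have key := jb_mul_ge hm x y
  have h1 : (inner ℝ x y : ℝ) ≤ |(inner ℝ x y : ℝ)| := le_abs_self _
  have h2 : -|(inner ℝ x y : ℝ)| ≤ (inner ℝ x y : ℝ) := neg_abs_le _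
  rcases hι with h | h <;> subst h
  · exact le_abs.2 (Or.inr (by linarith))
  · exact le_abs.2 (Or.inl (by linarith))

lemma q2_norm_le {m : ℝ} (hm : 0 < m) {d : ℕ} {Q : Fin 2 → Euc d → Euc d → ℂ} {C : ℝ}
    (hQ : ∀ η k₁ k₂, ‖Q η k₁ k₂‖ ≤ C) (η : Fin 2) (a b : Euc d) :
    ‖q2 m Q η a b‖ ≤ C / (4 * (2 * Real.pi) ^ ((d : ℝ) / 2) * (jb m a * jb m b)) := by
  have hc : (0:ℝ) < (2 * Real.pi) ^ ((d : ℝ) / 2) := Real.rpow_pos_of_pos (by positivity) _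
  have h1 := jb_pos hm a
  have h2 := jb_pos hm b
  have hden : (0:ℝ) < 4 * (2 * Real.pi) ^ ((d : ℝ) / 2) * (jb m a * jb m b) := by positivity
  rw [q2, norm_div, Complex.norm_real, Real.norm_of_nonneg hden.le]
  gcongr; exact hQ _ _ _

lemma q3_bound {m : ℝ} (hm : 0 < m) {d : ℕ} {Q : Fin 2 → Euc d → Euc d → ℂ} {C : ℝ}
    (hQ : ∀ η k₁ k₂, ‖Q η k₁ k₂‖ ≤ C) {ι : ℝ} (hι : ι = 1 ∨ ι = -1) (η : Fin 2) (k₁ k₂ : Euc d) :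
    ‖q3 m Q η ι k₁ k₂ (-k₂)‖ ≤
      C ^ 2 / (4 * ((2 * Real.pi) ^ ((d : ℝ) / 2)) ^ 2 * m ^ 2 * Real.sqrt m) := by
  have hC : 0 ≤ C := le_trans (norm_nonneg _) (hQ 0 0 0)
  set c := (2 * Real.pi) ^ ((d : ℝ) / 2) with hcdef
  have hc : (0:ℝ) < c := Real.rpow_pos_of_pos (by positivity) _
  set s := Real.sqrt m with hsdef
  have hs : 0 < s := Real.sqrt_pos.2 hm
  have hs2 : s * s = m := Real.mul_self_sqrt hm.le
  have hk : k₁ + k₂ + -k₂ = k₁ := by abel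
  have hA : 0 < jb m (k₁ + -k₂) := jb_pos hm _
  have hD := denom_ge hm hι k₁ k₂
  have hDne : m + 2 * ((inner ℝ k₁ k₂ : ℝ) - ι * (jb m k₁ * jb m k₂)) ≠ 0 := by
    intro h; rw [h] at hD; simp at hD; linarith
  rw [q3, hk]
  rw [norm_mul, norm_mul, Complex.norm_real]
  have h1 : |4 * jb m (k₁ + -k₂) / (m + 2 * ((inner ℝ k₁ k₂ : ℝ) - ι * (jb m k₁ * jb m k₂)))|
      ≤ 4 * jb m (k₁ + -k₂) / m := by
    rw [abs_div]
    apply div_le_div₀ (by positivity) (by rw [abs_of_nonneg (by positivity)]) hm hD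
  have h2 : ‖q2 m Q (1 - η) k₁ (-k₂)‖ ≤ C / (4 * c * (s * s)) := by
    refine le_trans (q2_norm_le hm hQ _ _ _) ?_
    rw [jb_neg]
    have := jb_pos hm k₁; have := jb_pos hm k₂
    gcongr <;> first | positivity | exact sqrt_le_jb hm _
  have h3 : ‖q2 m Q η (k₁ + -k₂) k₂‖ ≤ C / (4 * c * (jb m (k₁ + -k₂) * s)) := by
    refine le_trans (q2_norm_le hm hQ _ _ _) ?_
    have := jb_pos hm k₂
    gcongr <;> first | positivity | exact sqrt_le_jb hm _
  calc |4 * jb m (k₁ + -k₂) / (m + 2 * ((inner ℝ k₁ k₂:ℝ) - ι * (jb m k₁ * jb m k₂)))| *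
        ‖q2 m Q (1 - η) k₁ (-k₂)‖ * ‖q2 m Q η (k₁ + -k₂) k₂‖
      ≤ (4 * jb m (k₁ + -k₂) / m) * (C / (4 * c * (s * s))) *
          (C / (4 * c * (jb m (k₁ + -k₂) * s))) := by
        gcongr <;> first | positivity | assumption
    _ = C ^ 2 / (4 * c ^ 2 * m ^ 2 * s) := by
        rw [hs2]; field_simp

lemma kernel_ident (m : ℝ) {d : ℕ} (Q : Fin 2 → Euc d → Euc d → ℂ) (ξ ζ : Euc d) :
    Nker m Q 0 ξ ζ + PkerP m Q ξ ζ =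
      (starRingEnd ℂ) (Nker m Q 1 ξ ζ + PkerM m Q ξ ζ) := by
  simp only [Nker, PkerP, PkerM, map_sub, map_add, Complex.conj_conj]
  ring

lemma pointwise_im (a b c e w : ℂ) (h : a + c = (starRingEnd ℂ) (b + e)) :
    (a * (starRingEnd ℂ) w).im + (b * w).im + (c * (starRingEnd ℂ) w + e * w).im = 0 := by
  have h1 := congrArg Complex.re h
  have h2 := congrArg Complex.im h
  simp [Complex.add_re, Complex.add_im, Complex.mul_re, Complex.mul_im,
    Complex.conj_re, Complex.conj_im] at h1 h2 ⊢
  linear_combination (-w.im) * h1 + w.re * h2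

lemma jb_cont (m : ℝ) {d : ℕ} : Continuous (jb m (d := d)) := by
  unfold jb; fun_prop

lemma q2_meas (m : ℝ) {d : ℕ} {Q : Fin 2 → Euc d → Euc d → ℂ}
    (hQ : ∀ η : Fin 2, Measurable fun p : Euc d × Euc d => Q η p.1 p.2) (η : Fin 2)
    {α : Type} [MeasurableSpace α] {f g : α → Euc d} (hf : Measurable f) (hg : Measurable g) :
    Measurable fun x => q2 m Q η (f x) (g x) := by
  unfold q2
  apply Measurable.div
  · exact (hQ η).comp (hf.prodMk hg)
  · apply Measurable.comp Complex.measurable_ofReal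
    have hjb := (jb_cont m (d:=d)).measurable
    exact (measurable_const.mul ((hjb.comp hf).mul (hjb.comp hg)))

lemma q3_meas (m : ℝ) {d : ℕ} {Q : Fin 2 → Euc d → Euc d → ℂ}
    (hQ : ∀ η : Fin 2, Measurable fun p : Euc d × Euc d => Q η p.1 p.2) (η : Fin 2) (ι : ℝ)
    {α : Type} [MeasurableSpace α] {f g h : α → Euc d}
    (hf : Measurable f) (hg : Measurable g) (hh : Measurable h) :
    Measurable fun x => q3 m Q η ι (f x) (g x) (h x) := by
  unfold q3
  have hjb := (jb_cont m (d:=d)).measurable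
  have hfh : Measurable fun x => f x + h x := hf.add hh
  have hfgh : Measurable fun x => f x + g x + h x := (hf.add hg).add hh
  refine Measurable.mul (Measurable.mul ?_ (q2_meas m hQ _ hf hh)) (q2_meas m hQ _ hfh hg)
  apply Measurable.comp Complex.measurable_ofReal
  apply Measurable.div
  · exact measurable_const.mul (hjb.comp hfh)
  · apply Measurable.add measurable_const
    apply Measurable.mul measurable_const
    apply Measurable.sub
    · exact Measurable.inner (𝕜 := ℝ) hfgh hg
    · exact measurable_const.mul ((hjb.comp hfgh).mul (hjb.comp hg))

/-- Conservation law for the resonant (cross) system built from bounded measurable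
nonlinearities `Q⁰, Q¹`: along any pointwise-differentiable solution
`(ρ⁰, ρ¹, ρ^×)` on `[0,T]` with `ρ^×(t,·)` measurable and integrable, at every `ξ` where
`ρ⁰ ρ¹` never vanishes one has
`|ρ^×(t,ξ)|² ρ⁰(0,ξ) ρ¹(0,ξ) = |ρ^×(0,ξ)|² ρ⁰(t,ξ) ρ¹(t,ξ)`. -/
theorem stmt17 (m : ℝ) (hm : 0 < m) (d : ℕ) (hd : 1 ≤ d)
    (Q : Fin 2 → Euc d → Euc d → ℂ)
    (hQmeas : ∀ η : Fin 2, Measurable fun p : Euc d × Euc d => Q η p.1 p.2)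
    (hQbdd : ∃ C : ℝ, ∀ (η : Fin 2) (k₁ k₂ : Euc d), ‖Q η k₁ k₂‖ ≤ C)
    (T : ℝ) (hT : 0 < T)
    (ρ0 ρ1 : ℝ → Euc d → ℝ) (ρX : ℝ → Euc d → ℂ)
    (hmeasX : ∀ t ∈ Set.Icc (0:ℝ) T, Measurable (ρX t))
    (hintX : ∀ t ∈ Set.Icc (0:ℝ) T, Integrable (ρX t))
    (hsys0 : ∀ ξ : Euc d, ∀ t ∈ Set.Icc (0:ℝ) T,
      HasDerivWithinAt (fun s => ρ0 s ξ)
        (4 * ρ0 t ξ * ∫ ζ, (Nker m Q 0 ξ ζ * (starRingEnd ℂ) (ρX t ζ)).im)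
        (Set.Icc 0 T) t)
    (hsys1 : ∀ ξ : Euc d, ∀ t ∈ Set.Icc (0:ℝ) T,
      HasDerivWithinAt (fun s => ρ1 s ξ)
        (4 * ρ1 t ξ * ∫ ζ, (Nker m Q 1 ξ ζ * ρX t ζ).im)
        (Set.Icc 0 T) t)
    (hsysX : ∀ ξ : Euc d, ∀ t ∈ Set.Icc (0:ℝ) T,
      HasDerivWithinAt (fun s => ρX s ξ)
        (2 * Complex.I * ρX t ξ *
          ∫ ζ, (PkerP m Q ξ ζ * (starRingEnd ℂ) (ρX t ζ) + PkerM m Q ξ ζ * ρX t ζ))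
        (Set.Icc 0 T) t) :
    ∀ ξ : Euc d, (∀ t ∈ Set.Icc (0:ℝ) T, ρ0 t ξ * ρ1 t ξ ≠ 0) →
      ∀ t ∈ Set.Icc (0:ℝ) T,
        ‖ρX t ξ‖ ^ 2 * (ρ0 0 ξ * ρ1 0 ξ) = ‖ρX 0 ξ‖ ^ 2 * (ρ0 t ξ * ρ1 t ξ) := by
  obtain ⟨C, hQ⟩ := hQbdd
  intro ξ hne t ht
  set K := C ^ 2 / (4 * ((2 * Real.pi) ^ ((d : ℝ) / 2)) ^ 2 * m ^ 2 * Real.sqrt m) with hKdef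
  -- kernel bounds
  have hq3b : ∀ (η : Fin 2) (ι : ℝ), ι = 1 ∨ ι = -1 → ∀ k₂ : Euc d,
      ‖q3 m Q η ι ξ k₂ (-k₂)‖ ≤ K := fun η ι hι k₂ => q3_bound hm hQ hι η ξ k₂
  have hNbd : ∀ (η : Fin 2) (ζ : Euc d), ‖Nker m Q η ξ ζ‖ ≤ 2 * K := by
    intro η ζ
    have h1 := hq3b η 1 (Or.inl rfl) ζ
    have h2 := hq3b η (-1) (Or.inr rfl) (-ζ)
    rw [neg_neg] at h2
    calc ‖Nker m Q η ξ ζ‖ ≤ ‖q3 m Q η 1 ξ ζ (-ζ)‖ + ‖(starRingEnd ℂ) (q3 m Q η (-1) ξ (-ζ) ζ)‖ :=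
          norm_sub_le _ _
      _ ≤ K + K := by rw [RCLike.norm_conj]; exact add_le_add h1 h2
      _ = 2 * K := by ring
  have hPPbd : ∀ ζ : Euc d, ‖PkerP m Q ξ ζ‖ ≤ 2 * K := by
    intro ζ
    have h1 := hq3b 1 1 (Or.inl rfl) ζ
    have h2 := hq3b 0 1 (Or.inl rfl) ζ
    calc ‖PkerP m Q ξ ζ‖ ≤ ‖(starRingEnd ℂ) (q3 m Q 1 1 ξ ζ (-ζ))‖ + ‖q3 m Q 0 1 ξ ζ (-ζ)‖ :=
          norm_sub_le _ _
      _ ≤ K + K := by rw [RCLike.norm_conj]; exact add_le_add h1 h2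
      _ = 2 * K := by ring
  have hPMbd : ∀ ζ : Euc d, ‖PkerM m Q ξ ζ‖ ≤ 2 * K := by
    intro ζ
    have h1 := hq3b 1 (-1) (Or.inr rfl) (-ζ)
    have h2 := hq3b 0 (-1) (Or.inr rfl) (-ζ)
    rw [neg_neg] at h1 h2
    calc ‖PkerM m Q ξ ζ‖ ≤ ‖(starRingEnd ℂ) (q3 m Q 1 (-1) ξ (-ζ) ζ)‖ + ‖q3 m Q 0 (-1) ξ (-ζ) ζ‖ :=
          norm_sub_le _ _
      _ ≤ K + K := by rw [RCLike.norm_conj]; exact add_le_add h1 h2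
      _ = 2 * K := by ring
  -- kernel measurability
  have hq3m : ∀ (η : Fin 2) (ι : ℝ),
      Measurable (fun ζ : Euc d => q3 m Q η ι ξ ζ (-ζ)) ∧
      Measurable (fun ζ : Euc d => q3 m Q η ι ξ (-ζ) ζ) :=
    fun η ι => ⟨q3_meas m hQmeas η ι measurable_const measurable_id measurable_id.neg,
      q3_meas m hQmeas η ι measurable_const measurable_id.neg measurable_id⟩
  have hstarMeas : ∀ {g : Euc d → ℂ}, Measurable g →
      Measurable fun ζ => (starRingEnd ℂ) (g ζ) := by
    intro g hg
    have := Complex.conjCLE.continuous.measurable.comp hg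
    simpa only [Function.comp_def, Complex.conjCLE_apply] using this
  have hNmeas : ∀ η : Fin 2, Measurable (fun ζ => Nker m Q η ξ ζ) := by
    intro η
    unfold Nker
    exact (hq3m η 1).1.sub (hstarMeas (hq3m η (-1)).2)
  have hPPmeas : Measurable (fun ζ => PkerP m Q ξ ζ) := by
    unfold PkerP
    exact (hstarMeas (hq3m 1 1).1).sub (hq3m 0 1).1
  have hPMmeas : Measurable (fun ζ => PkerM m Q ξ ζ) := by
    unfold PkerM
    exact (hstarMeas (hq3m 1 (-1)).2).sub (hq3m 0 (-1)).2
  -- the derivative of the ratio vanishes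
  set F := fun s => Complex.normSq (ρX s ξ) / (ρ0 s ξ * ρ1 s ξ) with hFdef
  have hcmain : ∀ u ∈ Set.Icc (0:ℝ) T, HasDerivWithinAt F 0 (Set.Icc 0 T) u := by
    intro u hu
    have hXint := hintX u hu
    have hconjInt : Integrable (fun ζ => (starRingEnd ℂ) (ρX u ζ)) := by
      have := (Complex.conjCLE : ℂ ≃L[ℝ] ℂ).toContinuousLinearMap.integrable_comp hXint
      simpa only [ContinuousLinearEquiv.coe_coe, Complex.conjCLE_apply] using this
    have hInt0 : Integrable (fun ζ => Nker m Q 0 ξ ζ * (starRingEnd ℂ) (ρX u ζ)) :=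
      hconjInt.bdd_mul (hNmeas 0).aestronglyMeasurable (Filter.Eventually.of_forall fun ζ => hNbd 0 ζ)
    have hInt1 : Integrable (fun ζ => Nker m Q 1 ξ ζ * ρX u ζ) :=
      hXint.bdd_mul (hNmeas 1).aestronglyMeasurable (Filter.Eventually.of_forall fun ζ => hNbd 1 ζ)
    have hIntP : Integrable
        (fun ζ => PkerP m Q ξ ζ * (starRingEnd ℂ) (ρX u ζ) + PkerM m Q ξ ζ * ρX u ζ) :=
      (hconjInt.bdd_mul hPPmeas.aestronglyMeasurable (Filter.Eventually.of_forall fun ζ => hPPbd ζ)).add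
        (hXint.bdd_mul hPMmeas.aestronglyMeasurable (Filter.Eventually.of_forall fun ζ => hPMbd ζ))
    set A0 := ∫ ζ, (Nker m Q 0 ξ ζ * (starRingEnd ℂ) (ρX u ζ)).im with hA0
    set A1 := ∫ ζ, (Nker m Q 1 ξ ζ * ρX u ζ).im with hA1
    set Iv := ∫ ζ, (PkerP m Q ξ ζ * (starRingEnd ℂ) (ρX u ζ) + PkerM m Q ξ ζ * ρX u ζ) with hIv
    have him0 : Integrable (fun ζ => (Nker m Q 0 ξ ζ * (starRingEnd ℂ) (ρX u ζ)).im) := by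
      simpa only [RCLike.im_eq_complex_im] using hInt0.im
    have him1 : Integrable (fun ζ => (Nker m Q 1 ξ ζ * ρX u ζ).im) := by
      simpa only [RCLike.im_eq_complex_im] using hInt1.im
    have himP : Integrable
        (fun ζ => (PkerP m Q ξ ζ * (starRingEnd ℂ) (ρX u ζ) + PkerM m Q ξ ζ * ρX u ζ).im) := by
      simpa only [RCLike.im_eq_complex_im] using hIntP.im
    have hptw : ∀ ζ : Euc d,
        (Nker m Q 0 ξ ζ * (starRingEnd ℂ) (ρX u ζ)).im + (Nker m Q 1 ξ ζ * ρX u ζ).im +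
          (PkerP m Q ξ ζ * (starRingEnd ℂ) (ρX u ζ) + PkerM m Q ξ ζ * ρX u ζ).im = 0 :=
      fun ζ => pointwise_im _ _ _ _ _ (kernel_ident m Q ξ ζ)
    have hIvim : (∫ ζ, (PkerP m Q ξ ζ * (starRingEnd ℂ) (ρX u ζ) + PkerM m Q ξ ζ * ρX u ζ).im)
        = Iv.im := by
      simpa only [RCLike.im_eq_complex_im] using integral_im hIntP
    have key : A0 + A1 = -Iv.im := by
      have hadd01 : Integrable (fun ζ => (Nker m Q 0 ξ ζ * (starRingEnd ℂ) (ρX u ζ)).im +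
          (Nker m Q 1 ξ ζ * ρX u ζ).im) := him0.add him1
      have hsum : A0 + A1 +
          (∫ ζ, (PkerP m Q ξ ζ * (starRingEnd ℂ) (ρX u ζ) + PkerM m Q ξ ζ * ρX u ζ).im) = 0 := by
        have h1 : A0 + A1 = ∫ ζ, ((Nker m Q 0 ξ ζ * (starRingEnd ℂ) (ρX u ζ)).im +
            (Nker m Q 1 ξ ζ * ρX u ζ).im) := (integral_add him0 him1).symm
        have h2 : (∫ ζ, ((Nker m Q 0 ξ ζ * (starRingEnd ℂ) (ρX u ζ)).im +
              (Nker m Q 1 ξ ζ * ρX u ζ).im)) +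
            (∫ ζ, (PkerP m Q ξ ζ * (starRingEnd ℂ) (ρX u ζ) + PkerM m Q ξ ζ * ρX u ζ).im) =
            ∫ ζ, ((Nker m Q 0 ξ ζ * (starRingEnd ℂ) (ρX u ζ)).im +
              (Nker m Q 1 ξ ζ * ρX u ζ).im +
              (PkerP m Q ξ ζ * (starRingEnd ℂ) (ρX u ζ) + PkerM m Q ξ ζ * ρX u ζ).im) :=
          (integral_add hadd01 himP).symm
        rw [h1, h2]
        simp only [hptw]
        exact integral_zero _ _
      rw [hIvim] at hsum
      linarith
    -- derivative of normSq (ρX s ξ)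
    have hz := hsysX ξ u hu
    rw [← hIv] at hz
    have hzs := hz.star
    have hmulz := hz.mul hzs
    have hre := Complex.reCLM.hasFDerivAt.comp_hasDerivWithinAt u hmulz
    simp only [Function.comp, Complex.reCLM_apply] at hre
    have hfn : ∀ y, Complex.normSq (ρX y ξ) = (ρX y ξ * star (ρX y ξ)).re := fun y => by
      rw [← starRingEnd_apply, Complex.mul_conj, Complex.ofReal_re]
    have hh : HasDerivWithinAt (fun s => Complex.normSq (ρX s ξ))
        ((-4 * Iv.im) * Complex.normSq (ρX u ξ)) (Set.Icc 0 T) u := by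
      have h' := hre.congr (fun y _ => hfn y) (hfn u)
      refine h'.congr_deriv (Eq.symm ?_)
      simp only [← starRingEnd_apply, map_mul, Complex.add_re, Complex.mul_re, Complex.mul_im,
        Complex.normSq_apply, Complex.I_re, Complex.I_im, Complex.conj_re, Complex.conj_im,
        Complex.conj_I, Complex.neg_re, Complex.neg_im, Complex.re_ofNat, Complex.im_ofNat]
      ring
    -- derivative of ρ0 * ρ1
    have hp : HasDerivWithinAt (fun s => ρ0 s ξ * ρ1 s ξ)
        ((-4 * Iv.im) * (ρ0 u ξ * ρ1 u ξ)) (Set.Icc 0 T) u := by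
      have := (hsys0 ξ u hu).mul (hsys1 ξ u hu)
      rw [← hA0, ← hA1] at this
      refine this.congr_deriv (Eq.symm ?_)
      linear_combination (-4 * ρ0 u ξ * ρ1 u ξ) * key
    have hdiv := hh.div hp (hne u hu)
    refine hdiv.congr_deriv (Eq.symm ?_)
    rw [eq_comm, div_eq_zero_iff]
    left; ring
  have hconst := constant_of_has_deriv_right_zero
    (fun x hx => (hcmain x hx).continuousWithinAt)
    (fun x hx => (hcmain x (Set.Ico_subset_Icc_self hx)).mono_of_mem_nhdsWithin
      (Icc_mem_nhdsGE_of_mem hx))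
  have h0T : (0:ℝ) ∈ Set.Icc (0:ℝ) T := ⟨le_refl 0, hT.le⟩
  have hFt : F t = F 0 := hconst t ht
  rw [hFdef] at hFt
  simp only [] at hFt
  rw [div_eq_div_iff (hne t ht) (hne 0 h0T)] at hFt
  have hnrm : ∀ z : ℂ, ‖z‖ ^ 2 = Complex.normSq z := fun z => by
    rw [Complex.sq_norm]
  rw [hnrm, hnrm]
  exact hFt
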